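/- For all sufficiently large n, Burnside's approximation √(2π)((n+1/2)/e)^{n+1/2} is closer to n! than Stirling's approximation √(2πn)(n/e)^n, i.e., |√(2π)((n+1/2)/e)^{n+1/2} − n!| < |√(2πn)(n/e)^n − n!|. -/

import Mathlib

/-!
Write `S n` and `B n` for Stirling's and Burnside's approximations, and put
`n! = S n * exp (A n)`, `B n = S n * exp (D n)`. Then `A n = log (stirlingSeq n / √π)`, and
keeping only the first term of the series for `A n - A (n + 1)` and telescoping gives
`A n ≥ 1 / (6 (2n + 1))`. On the other side `D n = (n + 1/2) log (1 + 1/(2n)) - 1/2`, and the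
bounds `2y/(y + 2) < log (1 + y)` and `artanh t ≤ t + t³/(1 - t²)` give `0 < D n ≤ 1/(8n)`.
So `S n < B n`, and `exp (D n) + 1 < 2 exp (A n)`, i.e. `B n + S n < 2 n!`, as soon as `n ≥ 2`;
together these say `|B n - n!| < n! - S n`.
-/

open Real Nat Filter Topology Stirling

noncomputable section

def stirlingApprox (x : ℝ) : ℝ := √(2 * π * x) * (x / exp 1) ^ x

def burnsideApprox (x : ℝ) : ℝ := √(2 * π) * ((x + 1/2) / exp 1) ^ (x + 1/2)

end

lemma stirlingApprox_pos {x : ℝ} (hx : 0 < x) : 0 < stirlingApprox x := by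
  unfold stirlingApprox
  positivity

lemma burnsideApprox_pos {x : ℝ} (hx : -(1/2) < x) : 0 < burnsideApprox x :=
  mul_pos (sqrt_pos.2 (by positivity)) (rpow_pos_of_pos (div_pos (by linarith) (exp_pos 1)) _)

lemma log_burnsideApprox_sub_log_stirlingApprox {x : ℝ} (hx : 0 < x) :
    log (burnsideApprox x) - log (stirlingApprox x) = (x + 1/2) * log (1 + (2 * x)⁻¹) - 1/2 := by
  have hsplit : x + 1/2 = x * (1 + (2 * x)⁻¹) := by field_simp
  unfold burnsideApprox stirlingApprox
  rw [log_mul (by positivity) (by positivity), log_mul (by positivity) (by positivity),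
    log_sqrt (by positivity), log_sqrt (by positivity), log_mul (by positivity) hx.ne',
    log_rpow (by positivity), log_rpow (by positivity), log_div (by positivity) (exp_ne_zero 1),
    log_div hx.ne' (exp_ne_zero 1), log_exp, hsplit, log_mul hx.ne' (by positivity)]
  field_simp
  ring

lemma log_burnsideApprox_sub_log_stirlingApprox_pos {x : ℝ} (hx : 0 < x) :
    0 < log (burnsideApprox x) - log (stirlingApprox x) := by
  rw [log_burnsideApprox_sub_log_stirlingApprox hx]
  have hlog := lt_log_one_add_of_pos (inv_pos.2 (mul_pos two_pos hx))
  have hhalf : 1/2 < (x + 1/2) * (2 * (2 * x)⁻¹ / ((2 * x)⁻¹ + 2)) := by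
    field_simp
    linarith
  linarith [mul_lt_mul_of_pos_left hlog (by positivity : 0 < x + 1/2)]

lemma log_burnsideApprox_sub_log_stirlingApprox_le {x : ℝ} (hx : 0 < x) :
    log (burnsideApprox x) - log (stirlingApprox x) ≤ 1 / (8 * x) := by
  rw [log_burnsideApprox_sub_log_stirlingApprox hx]
  set t := 1 / (4 * x + 1) with ht
  have ht1 : t < 1 := by rw [ht, div_lt_one (by positivity)]; linarith
  have htaylor := log_div_le_sum_range_add (by positivity : 0 ≤ t) ht1 1
  have hratio : (1 + t) / (1 - t) = 1 + (2 * x)⁻¹ := by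
    rw [ht]
    field_simp
    ring
  rw [Finset.sum_range_one, hratio] at htaylor
  simp only [Nat.cast_zero, mul_zero, zero_add, pow_one, div_one] at htaylor
  have hsum : (2 * x + 1) * (t + t ^ 3 / (1 - t ^ 2)) - 1/2 = 1 / (8 * x) := by
    have h1t : 1 - t ^ 2 = 8 * x * (2 * x + 1) / (4 * x + 1) ^ 2 := by
      rw [ht]
      field_simp
      ring
    rw [h1t, ht]
    field_simp
    ring
  linarith [mul_le_mul_of_nonneg_left htaylor (by positivity : 0 ≤ 2 * x + 1)]

namespace Stirling

lemma one_div_le_log_stirlingSeq_sdiff (n : ℕ) :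
    1 / (3 * (2 * n + 3) ^ 2) ≤ log (stirlingSeq (n + 1)) - log (stirlingSeq (n + 2)) := by
  refine Eq.trans_le ?_ (le_hasSum (log_stirlingSeq_sdiff_hasSum n) 0 fun k _ => by positivity)
  push_cast
  field_simp
  ring

lemma log_sqrt_pi_add_le_log_stirlingSeq {n : ℕ} (hn : n ≠ 0) :
    log √π + 1 / (6 * (2 * n + 1)) ≤ log (stirlingSeq n) := by
  obtain ⟨m, rfl⟩ : ∃ m, n = m + 1 := ⟨n - 1, by omega⟩
  let f : ℕ → ℝ := fun k => log (stirlingSeq (k + 1)) - 1 / (6 * (2 * k + 3))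
  have hf : Antitone f := antitone_nat_of_succ_le fun k => by
    have htel : 1 / (6 * (2 * (k : ℝ) + 3)) - 1 / (6 * (2 * ((k + 1 : ℕ) : ℝ) + 3))
        ≤ 1 / (3 * (2 * k + 3) ^ 2) := by
      push_cast
      rw [div_sub_div _ _ (by positivity) (by positivity),
        div_le_div_iff₀ (by positivity) (by positivity)]
      nlinarith
    simp only [f]
    linarith [one_div_le_log_stirlingSeq_sdiff k]
  have hlim : Tendsto f atTop (𝓝 (log √π)) := by
    have hseq := (tendsto_stirlingSeq_sqrt_pi.comp (tendsto_add_atTop_nat 1)).log (by positivity)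
    have hzero : Tendsto (fun k : ℕ => 1 / (6 * (2 * (k : ℝ) + 3))) atTop (𝓝 0) := by
      simp only [one_div]
      refine (tendsto_atTop_mono (fun k => ?_) tendsto_natCast_atTop_atTop).inv_tendsto_atTop
      linarith [k.cast_nonneg (α := ℝ)]
    have hdiff := hseq.sub hzero
    rw [sub_zero] at hdiff
    exact hdiff
  have hm := hf.le_of_tendsto hlim m
  have hshift : 2 * ((m + 1 : ℕ) : ℝ) + 1 = 2 * m + 3 := by push_cast; ring
  simp only [f] at hm
  rw [hshift]
  linarith

end Stirling

lemma log_factorial_sub_log_stirlingApprox {n : ℕ} (hn : n ≠ 0) :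
    log (n ! : ℝ) - log (stirlingApprox n) = log (stirlingSeq n) - log √π := by
  have hsplit : stirlingApprox n = √π * (√(2 * n) * (n / exp 1) ^ n) := by
    simp [stirlingApprox, sqrt_mul', rpow_natCast]
    ring
  have hn0 : (0 : ℝ) < n := by positivity
  rw [hsplit, stirlingSeq, log_div (by positivity) (by positivity),
    log_mul (by positivity) (by positivity)]
  ring

lemma mul_exp_log_sub_log {b s : ℝ} (hb : 0 < b) (hs : 0 < s) : s * exp (log b - log s) = b := by
  rw [exp_sub, exp_log hb, exp_log hs]
  field_simp

lemma abs_sub_lt_abs_sub_of_lt_of_add_lt {K : Type*} [Field K] [LinearOrder K]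
    [IsStrictOrderedRing K] {s b f : K} (hsb : s < b) (hbf : b + s < 2 * f) :
    |b - f| < |s - f| := by
  rw [abs_sub_comm s f, abs_of_pos (show 0 < f - s by linarith), abs_sub_lt_iff]
  constructor <;> linarith

lemma exp_add_one_lt_two_mul_exp {a d : ℝ} (ha : 0 < a) (hd : d ≤ 2 * a / (a + 1)) :
    exp d + 1 < 2 * exp a := by
  have hlog : 2 * a / (a + 1) < log (1 + 2 * a) := by
    convert lt_log_one_add_of_pos (mul_pos two_pos ha) using 1
    field_simp
  have hd_lt : exp d < 1 + 2 * a := by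
    rw [← exp_log (by positivity : 0 < 1 + 2 * a)]
    exact exp_lt_exp.2 (hd.trans_lt hlog)
  linarith [add_one_le_exp a]

theorem burnside_better_than_stirling :
    ∀ᶠ n : ℕ in atTop,
      |Real.sqrt (2 * π) * (((n : ℝ) + 1/2) / Real.exp 1) ^ ((n : ℝ) + 1/2) - (n ! : ℝ)| <
      |Real.sqrt (2 * π * n) * ((n : ℝ) / Real.exp 1) ^ (n : ℝ) - (n ! : ℝ)| := by
  filter_upwards [eventually_ge_atTop 2] with n hn
  have hn2 : (2 : ℝ) ≤ n := by exact_mod_cast hn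
  have hn0 : (0 : ℝ) < n := by linarith
  set S := stirlingApprox n
  set D := log (burnsideApprox n) - log S
  set A := log (n ! : ℝ) - log S
  have hS : 0 < S := stirlingApprox_pos hn0
  have hB : S * exp D = burnsideApprox n := mul_exp_log_sub_log (burnsideApprox_pos (by linarith)) hS
  have hF : S * exp A = n ! := mul_exp_log_sub_log (by positivity) hS
  have hD_pos : 0 < D := log_burnsideApprox_sub_log_stirlingApprox_pos hn0
  have hA : 1 / (6 * (2 * n + 1)) ≤ A := by
    have hA_eq : A = log (stirlingSeq n) - log √π := log_factorial_sub_log_stirlingApprox (by omega)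
    linarith [log_sqrt_pi_add_le_log_stirlingSeq (n := n) (by omega)]
  have hexp : exp D + 1 < 2 * exp A := by
    have hD_le : D ≤ 2 * (1 / (6 * (2 * n + 1))) / (1 / (6 * (2 * n + 1)) + 1) := by
      refine (log_burnsideApprox_sub_log_stirlingApprox_le hn0).trans ?_
      rw [div_le_div_iff₀ (by positivity) (by positivity)]
      field_simp
      linarith
    calc exp D + 1 < 2 * exp (1 / (6 * (2 * n + 1))) :=
          exp_add_one_lt_two_mul_exp (by positivity) hD_le
      _ ≤ 2 * exp A := by gcongr
  change |burnsideApprox n - n !| < |S - n !|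
  rw [← hB, ← hF]
  apply abs_sub_lt_abs_sub_of_lt_of_add_lt
  · exact lt_mul_of_one_lt_right hS (one_lt_exp_iff.2 hD_pos)
  · linarith [mul_lt_mul_of_pos_left hexp hS]
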